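/- Let G be a group, let h ∈ G be an element of order exactly 4, and set g = h². Let l, k be nonzero integers and let Q be the quotient of the free product G ∗ F(x) (F(x) the free group on one generator x) by the normal closure of the element x^l · g · x^k · h. Then the natural homomorphism G → Q is bijective if and only if |l + k| = 1 and (l ≡ 0 mod 4 or k ≡ 0 mod 4). -/

import Mathlib

open Monoid Monoid.Coprod

/-!
Let `T` and `H` be the images of `x` and `h` in `Q`. Mapping `Q` to `ℤ/(l + k)` by `G ↦ 0`,
`x ↦ 1` shows that surjectivity forces `|l + k| = 1`. If moreover `4 ∣ l` or `4 ∣ k`, the relator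
forces `T = H ^ (l + k)`, so `G → Q` is onto, and `x ↦ h ^ (l + k)` gives a retraction `Q → G`.
If neither exponent is divisible by `4`, the relator is satisfied in `S₅` by a 4-cycle `H` and
some `ξ ∉ ⟨H⟩`; sending `x` to `ξ` in the amalgam `G ∗_{h = H} S₅`, in which `G` and `S₅` meet
only in `⟨h⟩`, shows that the image of `x` does not lie in the image of `G`.
-/

namespace RelativePresentation

variable {G P Q : Type*} [Group G] [Group P] [Group Q]

abbrev gen : Coprod G (FreeGroup Unit) := Coprod.inr (FreeGroup.of ())

abbrev incl (r : Coprod G (FreeGroup Unit)) :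
    G →* Coprod G (FreeGroup Unit) ⧸ Subgroup.normalClosure {r} :=
  (QuotientGroup.mk' _).comp Coprod.inl

def lift (φ : G →* P) (t : P) : Coprod G (FreeGroup Unit) →* P :=
  Coprod.lift φ (FreeGroup.lift fun _ => t)

@[simp] theorem lift_inl (φ : G →* P) (t : P) (g : G) : lift φ t (Coprod.inl g) = φ g :=
  Coprod.lift_apply_inl _ _ _

@[simp] theorem lift_gen (φ : G →* P) (t : P) : lift φ t gen = t := by
  simp [lift, gen]

theorem comp_lift (f : P →* Q) (φ : G →* P) (t : P) : f.comp (lift φ t) = lift (f.comp φ) (f t) :=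
  Coprod.hom_ext (by ext; simp) (by ext; simp [lift])

theorem mk'_eq_lift (r : Coprod G (FreeGroup Unit)) :
    QuotientGroup.mk' (Subgroup.normalClosure {r}) = lift (incl r) (QuotientGroup.mk gen) :=
  Coprod.hom_ext (by ext; simp) (by ext; simp [lift])

theorem lift_incl_apply_self (r : Coprod G (FreeGroup Unit)) :
    lift (incl r) (QuotientGroup.mk gen) r = 1 := by
  rw [← mk'_eq_lift]
  exact (QuotientGroup.eq_one_iff r).2 (Subgroup.subset_normalClosure rfl)

variable {r : Coprod G (FreeGroup Unit)} {φ : G →* P} {t : P}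

def descend (hr : lift φ t r = 1) : Coprod G (FreeGroup Unit) ⧸ Subgroup.normalClosure {r} →* P :=
  QuotientGroup.lift _ (lift φ t) (Subgroup.normalClosure_le_normal (by simpa using hr))

theorem descend_comp_incl (hr : lift φ t r = 1) : (descend hr).comp (incl r) = φ := by
  ext; simp [descend]

theorem descend_mk_gen (hr : lift φ t r = 1) : descend hr (QuotientGroup.mk gen) = t := by
  simp [descend]

theorem mem_range_of_surjective_incl (hs : Function.Surjective (incl r)) (hr : lift φ t r = 1) :
    t ∈ φ.range := by
  obtain ⟨g, hg⟩ := hs (QuotientGroup.mk gen)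
  exact ⟨g, by rw [← descend_comp_incl hr, MonoidHom.comp_apply, hg, descend_mk_gen]⟩

theorem injective_incl (hφ : Function.Injective φ) (hr : lift φ t r = 1) :
    Function.Injective (incl r) := by
  rw [← descend_comp_incl hr, MonoidHom.coe_comp] at hφ
  exact hφ.of_comp

theorem surjective_incl {g : G} (hg : incl r g = QuotientGroup.mk gen) :
    Function.Surjective (incl r) := by
  have h : QuotientGroup.mk' _ = (incl r).comp (lift (MonoidHom.id G) g) := by
    rw [comp_lift, MonoidHom.comp_id, hg, mk'_eq_lift]
  have hs := QuotientGroup.mk'_surjective (Subgroup.normalClosure {r})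
  rw [h, MonoidHom.coe_comp] at hs
  exact hs.of_comp

abbrev relator (g h : G) (l k : ℤ) : Coprod G (FreeGroup Unit) :=
  gen ^ l * Coprod.inl g * gen ^ k * Coprod.inl h

@[simp] theorem lift_relator (g h : G) (l k : ℤ) :
    lift φ t (relator g h l k) = t ^ l * φ g * t ^ k * φ h := by
  simp [relator]

end RelativePresentation

universe u v

section CyclicAmalgam

variable {G : Type*} [Group G] {n : ℕ}

noncomputable def zmodHomOfOrderOf (x : G) (hx : orderOf x = n) :
    Multiplicative (ZMod n) →* G :=
  (Subgroup.zpowers x).subtype.comp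
    (zmodMulEquivOfGenerator (g := ⟨x, Subgroup.mem_zpowers x⟩)
      (fun ⟨_, k, hk⟩ => ⟨k, Subtype.ext hk⟩) ((Nat.card_zpowers x).trans hx)).toMonoidHom

theorem zmodHomOfOrderOf_injective (x : G) (hx : orderOf x = n) :
    Function.Injective (zmodHomOfOrderOf x hx) :=
  Subtype.val_injective.comp (MulEquiv.injective _)

@[simp] theorem zmodHomOfOrderOf_ofAdd_one (x : G) (hx : orderOf x = n) :
    zmodHomOfOrderOf x hx (Multiplicative.ofAdd 1) = x := by
  simp [zmodHomOfOrderOf]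

theorem zmodHomOfOrderOf_range (x : G) (hx : orderOf x = n) :
    (zmodHomOfOrderOf x hx).range = Subgroup.zpowers x := by
  rw [zmodHomOfOrderOf, MonoidHom.range_comp, MulEquiv.toMonoidHom_eq_coe,
    MonoidHom.range_eq_top.2 (MulEquiv.surjective _), ← MonoidHom.range_eq_map,
    Subgroup.range_subtype]

def boolFamily (A B : Type u) : Bool → Type u
  | true => A
  | false => B

instance (A B : Type u) [Group A] [Group B] : ∀ i, Group (boolFamily A B i)
  | true => inferInstanceAs (Group A)
  | false => inferInstanceAs (Group B)

def boolFamilyHom {A B : Type u} {K : Type*} [Group A] [Group B] [Group K]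
    (α : K →* A) (β : K →* B) : ∀ i, K →* boolFamily A B i
  | true => α
  | false => β

end CyclicAmalgam

theorem exists_amalgam_of_orderOf_eq {G : Type u} {C : Type v} [Group G] [Group C]
    {g : G} {c : C} (hgc : orderOf g = orderOf c) :
    ∃ (P : Type (max u v)) (_ : Group P) (φ : G →* P) (ψ : C →* P),
      φ g = ψ c ∧ ∀ y, ψ y ∈ φ.range → y ∈ Subgroup.zpowers c := by
  let α := (MulEquiv.ulift.symm : G ≃* ULift.{v} G).toMonoidHom.comp (zmodHomOfOrderOf g hgc)
  let β := (MulEquiv.ulift.symm : C ≃* ULift.{u} C).toMonoidHom.comp (zmodHomOfOrderOf c rfl)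
  have hinj : ∀ i, Function.Injective (boolFamilyHom α β i)
    | true => MulEquiv.ulift.symm.injective.comp (zmodHomOfOrderOf_injective g hgc)
    | false => MulEquiv.ulift.symm.injective.comp (zmodHomOfOrderOf_injective c rfl)
  let φ : G →* Monoid.PushoutI (boolFamilyHom α β) :=
    (Monoid.PushoutI.of true).comp MulEquiv.ulift.symm.toMonoidHom
  let ψ : C →* Monoid.PushoutI (boolFamilyHom α β) :=
    (Monoid.PushoutI.of false).comp MulEquiv.ulift.symm.toMonoidHom
  refine ⟨Monoid.PushoutI (boolFamilyHom α β), inferInstance, φ, ψ, ?_, ?_⟩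
  · have key := (Monoid.PushoutI.of_apply_eq_base (boolFamilyHom α β) true (.ofAdd 1)).trans
      (Monoid.PushoutI.of_apply_eq_base (boolFamilyHom α β) false (.ofAdd 1)).symm
    convert key using 2 <;> exact congrArg _ (zmodHomOfOrderOf_ofAdd_one _ _).symm
  · rintro y ⟨x, hx⟩
    have hmem : ψ y ∈ (Monoid.PushoutI.of false).range ⊓ (Monoid.PushoutI.of true).range :=
      ⟨⟨_, rfl⟩, ⟨_, hx⟩⟩
    rw [Monoid.PushoutI.inf_of_range_eq_base_range hinj Bool.false_ne_true] at hmem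
    obtain ⟨b, hb⟩ := hmem
    rw [← Monoid.PushoutI.of_apply_eq_base _ false] at hb
    have hby := congrArg ULift.down (Monoid.PushoutI.of_injective hinj false hb)
    rw [← zmodHomOfOrderOf_range c rfl]
    exact ⟨b, hby⟩

theorem eq_of_zpow_mul_sq_mul_zpow_mul_eq_one {Γ : Type*} [Group Γ] {T H : Γ} {a b : ℤ}
    (hH : H ^ 4 = 1) (hab : a + b = 1) (hdvd : 4 ∣ a ∨ 4 ∣ b)
    (hR : T ^ a * H ^ 2 * T ^ b * H = 1) : T = H := by
  -- `(H²)² = 1` turns the relator into `(HT)² = 1`; the relator then exhibits `T` as a conjugate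
  -- of `H`, so `T⁴ = 1` and one of the factors `T ^ a`, `T ^ b` disappears.
  obtain rfl : b = 1 - a := by omega
  have hsq : H ^ 2 = T ^ (-a) * H⁻¹ * T ^ (a - 1) := by
    calc H ^ 2 = T ^ (-a) * (T ^ a * H ^ 2 * T ^ (1 - a) * H) * H⁻¹ * T ^ (a - 1) := by group
      _ = _ := by rw [hR]; group
  have hHTH : H * T * H = T⁻¹ := by
    have h1 : T ^ (-a) * (H⁻¹ * T⁻¹ * H⁻¹ * T⁻¹) * (T ^ (-a))⁻¹ = 1 := by
      rw [← hH, show (4 : ℕ) = 2 + 2 from rfl, pow_add, hsq]; group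
    calc H * T * H = H * T * H * (H⁻¹ * T⁻¹ * H⁻¹ * T⁻¹) := by rw [conj_eq_one_iff.1 h1, mul_one]
      _ = T⁻¹ := by group
  have hconj : T = (H⁻¹ * T ^ (-a)) * H * (H⁻¹ * T ^ (-a))⁻¹ := by
    calc T = H⁻¹ * (T⁻¹ * H⁻¹ ^ 2) * H := by rw [← hHTH]; group
      _ = H⁻¹ * (T⁻¹ * (T ^ a * H ^ 2)⁻¹ * (T ^ a * H ^ 2 * T ^ (1 - a) * H) * T ^ a) * H := by
          rw [hR]; group
      _ = _ := by group
  have hT4 : T ^ 4 = 1 := by rw [hconj, conj_pow, hH]; group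
  have hH3 : H⁻¹ ^ 3 = H := by
    calc H⁻¹ ^ 3 = H⁻¹ ^ 3 * H ^ 4 := by rw [hH, mul_one]
      _ = H := by group
  have hT4m (m : ℤ) : T ^ (4 * m) = 1 := by rw [zpow_mul, zpow_ofNat, hT4, one_zpow]
  rcases hdvd with ⟨m, rfl⟩ | ⟨m, hm⟩
  · rw [hT4m, one_mul, show 1 - 4 * m = 1 + 4 * (-m) by ring, zpow_add, hT4m, zpow_one,
      mul_one] at hR
    calc T = H⁻¹ ^ 2 * (H ^ 2 * T * H) * H⁻¹ := by group
      _ = H⁻¹ ^ 3 := by rw [hR]; group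
      _ = H := hH3
  · rw [hm, hT4m, show a = 1 + 4 * (-m) by omega, zpow_add, hT4m, zpow_one, mul_one, mul_one] at hR
    calc T = T * H ^ 2 * H * H⁻¹ ^ 3 := by group
      _ = H := by rw [hR, hH3, one_mul]

theorem eq_zpow_add_of_zpow_mul_sq_mul_zpow_mul_eq_one {Γ : Type*} [Group Γ] {T H : Γ} {a b : ℤ}
    (hH : H ^ 4 = 1) (hab : |a + b| = 1) (hdvd : 4 ∣ a ∨ 4 ∣ b)
    (hR : T ^ a * H ^ 2 * T ^ b * H = 1) : T = H ^ (a + b) := by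
  rcases (abs_eq zero_le_one).1 hab with h1 | h1
  · rw [h1, zpow_one]
    exact eq_of_zpow_mul_sq_mul_zpow_mul_eq_one hH h1 hdvd hR
  · rw [h1, zpow_neg_one, ← inv_eq_iff_eq_inv]
    refine eq_of_zpow_mul_sq_mul_zpow_mul_eq_one (a := -a) (b := -b) hH (by omega)
      (by simpa only [Int.dvd_neg] using hdvd) ?_
    simpa only [inv_zpow', neg_neg] using hR

set_option maxRecDepth 10000 in
theorem exists_perm_of_add_eq_one {a b : ℤ} (hab : a + b = 1) (ha : ¬ 4 ∣ a) (hb : ¬ 4 ∣ b) :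
    ∃ H ξ : Equiv.Perm (Fin 5),
      orderOf H = 4 ∧ ξ ∉ Subgroup.zpowers H ∧ ξ ^ a * H ^ 2 * ξ ^ b * H = 1 := by
  have hH : orderOf (c[0, 1, 2, 3] : Equiv.Perm (Fin 5)) = 4 :=
    orderOf_eq_prime_pow (p := 2) (n := 1) (by decide) (by decide)
  have hξ : (c[0, 2, 4, 1] : Equiv.Perm (Fin 5)) ∉ Subgroup.zpowers c[0, 1, 2, 3] := by
    rw [mem_zpowers_iff_mem_range_orderOf, hH]; decide
  have hξ4 : (c[0, 2, 4, 1] : Equiv.Perm (Fin 5)) ^ (4 : ℤ) = 1 := by decide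
  rcases (by omega : a % 4 = 2 ∧ b % 4 = 3 ∨ a % 4 = 3 ∧ b % 4 = 2) with ⟨ha, hb⟩ | ⟨ha, hb⟩
  · refine ⟨_, _, hH, hξ, ?_⟩
    rw [zpow_eq_zpow_emod a hξ4, zpow_eq_zpow_emod b hξ4, ha, hb]
    decide
  · -- Inverting the relator and conjugating by `H` swaps the exponents.
    refine ⟨_, _, (orderOf_inv _).trans hH, by rwa [Subgroup.zpowers_inv, inv_mem_iff], ?_⟩
    have hξ4' : (c[0, 2, 4, 1] : Equiv.Perm (Fin 5))⁻¹ ^ (4 : ℤ) = 1 := by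
      rw [inv_zpow, hξ4, inv_one]
    rw [zpow_eq_zpow_emod a hξ4', zpow_eq_zpow_emod b hξ4', ha, hb]
    decide

theorem exists_perm_of_abs_add_eq_one {a b : ℤ} (hab : |a + b| = 1) (ha : ¬ 4 ∣ a)
    (hb : ¬ 4 ∣ b) :
    ∃ H ξ : Equiv.Perm (Fin 5),
      orderOf H = 4 ∧ ξ ∉ Subgroup.zpowers H ∧ ξ ^ a * H ^ 2 * ξ ^ b * H = 1 := by
  rcases (abs_eq zero_le_one).1 hab with h1 | h1
  · exact exists_perm_of_add_eq_one h1 ha hb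
  · obtain ⟨H, ξ, hH, hξ, hR⟩ := exists_perm_of_add_eq_one (a := -a) (b := -b) (by omega)
      (by rwa [Int.dvd_neg]) (by rwa [Int.dvd_neg])
    exact ⟨H, ξ⁻¹, hH, by rwa [inv_mem_iff], by simpa only [inv_zpow', neg_neg] using hR⟩

open RelativePresentation

section CaseJ4

variable {G : Type*} [Group G] {l k : ℤ}

theorem abs_add_eq_one_of_surjective_incl {g h : G}
    (hs : Function.Surjective (incl (relator g h l k))) : |l + k| = 1 := by
  set n := (l + k).natAbs
  have hr : lift (1 : G →* Multiplicative (ZMod n)) (.ofAdd 1) (relator g h l k) = 1 := by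
    simp only [lift_relator, MonoidHom.one_apply, mul_one]
    rw [← ofAdd_zsmul, ← ofAdd_zsmul, ← ofAdd_add, zsmul_one, zsmul_one, ← Int.cast_add,
      (ZMod.intCast_zmod_eq_zero_iff_dvd _ _).2 (Int.natAbs_dvd.2 dvd_rfl), ofAdd_zero]
  obtain ⟨_, h1⟩ := mem_range_of_surjective_incl hs hr
  have h10 : (1 : ZMod n) = 0 := congrArg Multiplicative.toAdd h1.symm
  have hn : n = 1 := ZMod.one_eq_zero_iff.1 h10
  rw [Int.abs_eq_natAbs]
  exact_mod_cast hn

theorem four_dvd_or_four_dvd_of_surjective_incl {h : G} (hh : orderOf h = 4) (hlk : |l + k| = 1)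
    (hs : Function.Surjective (incl (relator (h ^ 2) h l k))) : 4 ∣ l ∨ 4 ∣ k := by
  by_contra! hnd
  obtain ⟨H, ξ, hH, hξ, hR⟩ := exists_perm_of_abs_add_eq_one hlk hnd.1 hnd.2
  obtain ⟨P, _, φ, ψ, hφψ, hrange⟩ := exists_amalgam_of_orderOf_eq (hh.trans hH.symm)
  refine hξ (hrange ξ (mem_range_of_surjective_incl hs ?_))
  rw [lift_relator, map_pow, hφψ, ← map_pow, ← map_zpow, ← map_zpow, ← map_mul, ← map_mul,
    ← map_mul, hR, map_one]

theorem injective_incl_relator_sq {h : G} (hh : h ^ 4 = 1) (hlk : |l + k| = 1) :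
    Function.Injective (incl (relator (h ^ 2) h l k)) := by
  refine injective_incl (φ := MonoidHom.id G) (t := h ^ (l + k)) Function.injective_id ?_
  have hexp : (l + k) * l + 2 + (l + k) * k + 1 = 4 := by
    have hsq := sq_abs (l + k)
    rw [hlk] at hsq
    linear_combination -hsq
  calc lift (MonoidHom.id G) (h ^ (l + k)) (relator (h ^ 2) h l k)
      = h ^ ((l + k) * l + 2 + (l + k) * k + 1) := by
        simp only [lift_relator, MonoidHom.id_apply]; group
    _ = 1 := by rw [hexp]; exact_mod_cast hh

theorem surjective_incl_relator_sq {h : G} (hh : h ^ 4 = 1) (hlk : |l + k| = 1)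
    (hdvd : 4 ∣ l ∨ 4 ∣ k) : Function.Surjective (incl (relator (h ^ 2) h l k)) := by
  have hR := lift_incl_apply_self (relator (h ^ 2) h l k)
  rw [lift_relator, map_pow] at hR
  refine surjective_incl (g := h ^ (l + k)) ?_
  rw [map_zpow, eq_zpow_add_of_zpow_mul_sq_mul_zpow_mul_eq_one (by rw [← map_pow, hh, map_one])
    hlk hdvd hR]

end CaseJ4

theorem stmt_16_general {G : Type*} [Group G] (h : G) (hord : orderOf h = 4)
    (l k : ℤ) :
    Function.Bijective
      ((QuotientGroup.mk' (Subgroup.normalClosure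
          ({(Coprod.inr (FreeGroup.of ()) : Coprod G (FreeGroup Unit)) ^ l *
            Coprod.inl (h ^ 2) *
            (Coprod.inr (FreeGroup.of ()) : Coprod G (FreeGroup Unit)) ^ k * Coprod.inl h} :
            Set (Coprod G (FreeGroup Unit))))).comp
        (Coprod.inl : G →* Coprod G (FreeGroup Unit))) ↔
      (|l + k| = 1 ∧ ((4 : ℤ) ∣ l ∨ (4 : ℤ) ∣ k)) := by
  have hh : h ^ 4 = 1 := hord ▸ pow_orderOf_eq_one h
  constructor
  · intro hbij
    have hlk := abs_add_eq_one_of_surjective_incl hbij.2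
    exact ⟨hlk, four_dvd_or_four_dvd_of_surjective_incl hord hlk hbij.2⟩
  · rintro ⟨hlk, hdvd⟩
    exact ⟨injective_incl_relator_sq hh hlk, surjective_incl_relator_sq hh hlk hdvd⟩

/-- Case (J₄) of Theorem 4.1: for `h ∈ G` of order exactly 4, `g = h²`, and
nonzero integers `l, k`, the natural map `G → ⟨G, x | xˡ g xᵏ h⟩` is an
isomorphism iff `|l + k| = 1` and (`4 ∣ l` or `4 ∣ k`). -/
theorem stmt_16 {G : Type*} [Group G] (h : G) (hord : orderOf h = 4)
    (l k : ℤ) (hl : l ≠ 0) (hk : k ≠ 0) :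
    Function.Bijective
      ((QuotientGroup.mk' (Subgroup.normalClosure
          ({(Coprod.inr (FreeGroup.of ()) : Coprod G (FreeGroup Unit)) ^ l *
            Coprod.inl (h ^ 2) *
            (Coprod.inr (FreeGroup.of ()) : Coprod G (FreeGroup Unit)) ^ k * Coprod.inl h} :
            Set (Coprod G (FreeGroup Unit))))).comp
        (Coprod.inl : G →* Coprod G (FreeGroup Unit))) ↔
      (|l + k| = 1 ∧ ((4 : ℤ) ∣ l ∨ (4 : ℤ) ∣ k)) :=
  stmt_16_general h hord l k
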